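/- Let A be a Banach algebra, B a Banach space, T : A → B a bounded linear map, and define the bounded bilinear map m : A × A → B by m(a₁,a₂) = T(a₁a₂). If m is left strongly Arens irregular, then A is left strongly Arens irregular; likewise, if m is right strongly Arens irregular, then A is right strongly Arens irregular. -/

import Mathlib

open Filter Topology ContinuousLinearMap NormedSpace

noncomputable section

variable {X Y Z W E F : Type*}
  [NormedAddCommGroup X] [NormedSpace ℂ X]
  [NormedAddCommGroup Y] [NormedSpace ℂ Y]
  [NormedAddCommGroup Z] [NormedSpace ℂ Z]
  [NormedAddCommGroup E] [NormedSpace ℂ E]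
  [NormedAddCommGroup F] [NormedSpace ℂ F]

/-- Shortcut instances for bidual spaces (instance search in the current library needs them). -/
instance instNACGBidual (V : Type*) [NormedAddCommGroup V] [NormedSpace ℂ V] :
    NormedAddCommGroup (StrongDual ℂ (StrongDual ℂ V)) := inferInstance

instance instNSBidual (V : Type*) [NormedAddCommGroup V] [NormedSpace ℂ V] :
    NormedSpace ℂ (StrongDual ℂ (StrongDual ℂ V)) := inferInstance

/-- The (first) Arens adjoint `m* : Z* × X → Y*` of a bounded bilinear map
`m : X × Y → Z`, characterized by `⟨m*(z',x), y⟩ = ⟨z', m(x,y)⟩`. -/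
noncomputable def arensAdj (m : X →L[ℂ] Y →L[ℂ] Z) :
    StrongDual ℂ Z →L[ℂ] X →L[ℂ] StrongDual ℂ Y :=
  ((ContinuousLinearMap.compL ℂ Y Z ℂ).flip.comp m).flip

/-- The Arens triple adjoint `m*** : X** × Y** → Z**`. -/
noncomputable def arensExt (m : X →L[ℂ] Y →L[ℂ] Z) :
    StrongDual ℂ (StrongDual ℂ X) →L[ℂ] StrongDual ℂ (StrongDual ℂ Y) →L[ℂ] StrongDual ℂ (StrongDual ℂ Z) :=
  arensAdj (arensAdj (arensAdj m))

/-- A map between dual spaces is weak*-weak* continuous. -/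
def IsWeakStarCont (f : StrongDual ℂ E → StrongDual ℂ F) : Prop :=
  Continuous fun x : WeakDual ℂ E =>
    StrongDual.toWeakDual (f (WeakDual.toStrongDual x))

/-- First topological center of a bounded bilinear map. -/
def arensZ1 (m : X →L[ℂ] Y →L[ℂ] Z) : Set (StrongDual ℂ (StrongDual ℂ X)) :=
  {x'' | IsWeakStarCont fun y'' => arensExt m x'' y''}

/-- Second topological center of a bounded bilinear map. -/
def arensZ2 (m : X →L[ℂ] Y →L[ℂ] Z) : Set (StrongDual ℂ (StrongDual ℂ Y)) :=
  {y'' | IsWeakStarCont fun x'' => arensExt m.flip y'' x''}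

/-- `m` is Arens regular when `m*** = m^{t***t}`. -/
def ArensRegular (m : X →L[ℂ] Y →L[ℂ] Z) : Prop :=
  arensExt m = (arensExt m.flip).flip

/-- `m` is left strongly Arens irregular when `Z₁(m)` is the canonical image of `X`. -/
def LeftStronglyArensIrregular (m : X →L[ℂ] Y →L[ℂ] Z) : Prop :=
  arensZ1 m = Set.range (NormedSpace.inclusionInDoubleDual ℂ X)

/-- `m` is right strongly Arens irregular when `Z₂(m)` is the canonical image of `Y`. -/
def RightStronglyArensIrregular (m : X →L[ℂ] Y →L[ℂ] Z) : Prop :=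
  arensZ2 m = Set.range (NormedSpace.inclusionInDoubleDual ℂ Y)

/-- The adjoint `T* : F* → E*` of a bounded linear map. -/
noncomputable def dualMap' (T : E →L[ℂ] F) : StrongDual ℂ F →L[ℂ] StrongDual ℂ E :=
  (ContinuousLinearMap.compL ℂ E F ℂ).flip T

/-- The second adjoint `T** : E** → F**` of a bounded linear map. -/
noncomputable def bidualMap (T : E →L[ℂ] F) :
    StrongDual ℂ (StrongDual ℂ E) →L[ℂ] StrongDual ℂ (StrongDual ℂ F) :=
  dualMap' (dualMap' T)

/-- A net in `A`: a function from a nonempty directed preorder to `A`. -/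
structure Net (A : Type*) where
  ι : Type
  [pre : Preorder ι]
  [dir : IsDirected ι (· ≤ ·)]
  [ne : Nonempty ι]
  e : ι → A

attribute [instance] Net.pre Net.dir Net.ne

/-- A bounded approximate identity for a (non-unital) Banach algebra. -/
def IsBAI {A : Type*} [NonUnitalNormedRing A] (N : Net A) : Prop :=
  (∃ C : ℝ, ∀ i, ‖N.e i‖ ≤ C) ∧
  (∀ a : A, Tendsto (fun i => N.e i * a) atTop (𝓝 a)) ∧
  (∀ a : A, Tendsto (fun i => a * N.e i) atTop (𝓝 a))

end


/-!
Composing with `T` only enlarges the first topological center: `(T ∘ m)*** = T** ∘ m***` and `T**`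
is weak*-weak* continuous, so `Z₁(m) ⊆ Z₁(T ∘ m)`. Since the canonical image of `X` always lies
in `Z₁(m)`, left strong Arens irregularity passes from `T ∘ m` to `m`. The right-hand statement is
the left-hand one for the transposed maps, as `Z₂(m) = Z₁(mᵗ)` and `(T ∘ m)ᵗ = T ∘ mᵗ`.
-/

section

variable {X Y Z B : Type*}
  [NormedAddCommGroup X] [NormedSpace ℂ X]
  [NormedAddCommGroup Y] [NormedSpace ℂ Y]
  [NormedAddCommGroup Z] [NormedSpace ℂ Z]
  [NormedAddCommGroup B] [NormedSpace ℂ B]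

lemma range_inclusionInDoubleDual_subset_arensZ1 (m : X →L[ℂ] Y →L[ℂ] Z) :
    Set.range (inclusionInDoubleDual ℂ X) ⊆ arensZ1 m := by
  rintro _ ⟨x, rfl⟩
  exact WeakDual.continuous_of_continuous_eval fun z' => WeakDual.eval_continuous (arensAdj m z' x)

lemma arensZ1_subset_arensZ1_compL_comp (T : Z →L[ℂ] B) (m : X →L[ℂ] Y →L[ℂ] Z) :
    arensZ1 m ⊆ arensZ1 ((compL ℂ Y Z B T).comp m) := fun _ hx'' =>
  WeakDual.continuous_of_continuous_eval fun w' =>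
    (WeakDual.eval_continuous (dualMap' T w')).comp hx''

lemma arensZ2_eq_arensZ1_flip (m : X →L[ℂ] Y →L[ℂ] Z) : arensZ2 m = arensZ1 m.flip := rfl

lemma flip_compL_comp (T : Z →L[ℂ] B) (m : X →L[ℂ] Y →L[ℂ] Z) :
    ((compL ℂ Y Z B T).comp m).flip = (compL ℂ X Z B T).comp m.flip := rfl

lemma LeftStronglyArensIrregular.of_compL_comp (T : Z →L[ℂ] B) (m : X →L[ℂ] Y →L[ℂ] Z)
    (h : LeftStronglyArensIrregular ((compL ℂ Y Z B T).comp m)) :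
    LeftStronglyArensIrregular m :=
  subset_antisymm (h ▸ arensZ1_subset_arensZ1_compL_comp T m)
    (range_inclusionInDoubleDual_subset_arensZ1 m)

lemma RightStronglyArensIrregular.of_compL_comp (T : Z →L[ℂ] B) (m : X →L[ℂ] Y →L[ℂ] Z)
    (h : RightStronglyArensIrregular ((compL ℂ Y Z B T).comp m)) :
    RightStronglyArensIrregular m := by
  unfold RightStronglyArensIrregular at h ⊢
  rw [arensZ2_eq_arensZ1_flip, flip_compL_comp] at h
  exact LeftStronglyArensIrregular.of_compL_comp T m.flip h

end

theorem stmt_5_general {A B : Type*} [NonUnitalNormedRing A] [NormedSpace ℂ A] [IsScalarTower ℂ A A] [SMulCommClass ℂ A A] [NormedAddCommGroup B] [NormedSpace ℂ B]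
    (T : A →L[ℂ] B) :
    (LeftStronglyArensIrregular
        ((ContinuousLinearMap.compL ℂ A A B T).comp (ContinuousLinearMap.mul ℂ A)) →
      LeftStronglyArensIrregular (ContinuousLinearMap.mul ℂ A)) ∧
    (RightStronglyArensIrregular
        ((ContinuousLinearMap.compL ℂ A A B T).comp (ContinuousLinearMap.mul ℂ A)) →
      RightStronglyArensIrregular (ContinuousLinearMap.mul ℂ A)) :=
  ⟨LeftStronglyArensIrregular.of_compL_comp T _, RightStronglyArensIrregular.of_compL_comp T _⟩

/-- If `m(a₁,a₂) = T(a₁a₂)` is left (resp. right) strongly Arens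
irregular, then so is `A`. -/
theorem stmt_5 {A B : Type*} [NonUnitalNormedRing A] [NormedSpace ℂ A] [IsScalarTower ℂ A A] [SMulCommClass ℂ A A] [CompleteSpace A] [NormedAddCommGroup B] [NormedSpace ℂ B] [CompleteSpace B]
    (T : A →L[ℂ] B) :
    (LeftStronglyArensIrregular
        ((ContinuousLinearMap.compL ℂ A A B T).comp (ContinuousLinearMap.mul ℂ A)) →
      LeftStronglyArensIrregular (ContinuousLinearMap.mul ℂ A)) ∧
    (RightStronglyArensIrregular
        ((ContinuousLinearMap.compL ℂ A A B T).comp (ContinuousLinearMap.mul ℂ A)) →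
      RightStronglyArensIrregular (ContinuousLinearMap.mul ℂ A)) :=
  stmt_5_general T
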